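/- arXiv:1204.1098 — 7 statements merged into one kernel-verified Lean document; each statement's English description precedes it below -/
import Mathlib

section
/- Let R^0, R^1, …, R^n be subsets with R^t ⊆ {0,1,…,t}, 0 ∈ R^t, and R^t ∩ {0,…,t−1} ⊆ R^{t−1} for every t ≥ 1 (once an index is forgotten it stays forgotten). Define r(0) = 0 and, for t = 1,…,n+1, r(t) = min{ r(i) + W(t−1) − W(i) : i ∈ R^{t−1} and σ(i) ⊲ σ(t) }. Let C ⊆ {1,…,n} be (the index set of) a σ-path, write C̄ = {1,…,n} ∖ C, let F^t = {1,…,t} ∖ R^t, and call an index i ∈ C unsafe if there is a time t with i ≤ t ≤ n such that C ∩ [i,t] ⊆ F^t; let U denote the set of unsafe indices. Then r(n+1) ≤ w(C̄ ∪ U). -/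
open scoped Classical

/-- The weight `W(t) = w(1) + ⋯ + w(t)` (so `W 0 = 0`). -/
def Wsum (w : ℕ → ℕ) (t : ℕ) : ℕ := ∑ j ∈ Finset.Icc 1 t, w j

/-- The arc relation of the extended sequence: the sentinel `0` is below every index
`1 ≤ t ≤ n+1`, every index `1 ≤ i ≤ n` is below the sentinel `n+1`, and for indices
`1 ≤ i, t ≤ n` we have an arc iff `σ i ⊲ σ t` in the partial order `P`. -/
def Arr {P : Type*} [PartialOrder P] (n : ℕ) (σ : ℕ → P) (i t : ℕ) : Prop :=
  (i = 0 ∧ 1 ≤ t ∧ t ≤ n + 1) ∨ (1 ≤ i ∧ i ≤ n ∧ t = n + 1) ∨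
    (1 ≤ i ∧ i ≤ n ∧ 1 ≤ t ∧ t ≤ n ∧ σ i < σ t)

/-- Index `i` is unsafe (w.r.t. the σ-path `C` and remembered sets `R`): there is a time
`t` with `i ≤ t ≤ n` such that every index of `C ∩ [i,t]` is forgotten by time `t`,
i.e. lies in `F^t = {1,…,t} ∖ R^t`. -/
def Unsafe (n : ℕ) (R : ℕ → Finset ℕ) (C : Finset ℕ) (i : ℕ) : Prop :=
  ∃ t, i ≤ t ∧ t ≤ n ∧ ∀ j ∈ C, i ≤ j → j ≤ t → j ∉ R t

/-!
Call a path index safe if it is not unsafe. If `s` is safe (or `s = 0`) and `j > s` lies on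
the path (or `j = n + 1`), then at time `j - 1` some path index `s ≤ j' < j` is still
remembered, so the program may jump from `j'` to `j`; by induction on `j` this gives
`r j ≤ r s + W(j-1) - W(s)`: the path from `s` to `j` costs at most the weight strictly
between them. Chaining these bounds along the safe indices in increasing order, every
safe index is passed for free, so `r (n+1)` is at most the weight of the indices that are
not safe path indices, which is `w(C̄ ∪ U)`.
-/

open Finset

lemma Wsum_mono (w : ℕ → ℕ) {a b : ℕ} (h : a ≤ b) : Wsum w a ≤ Wsum w b :=
  sum_le_sum_of_subset (Icc_subset_Icc_right h)

lemma Wsum_add_sum_Ioc (w : ℕ → ℕ) {a b : ℕ} (h : a ≤ b) :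
    Wsum w a + ∑ j ∈ Ioc a b, w j = Wsum w b := by
  unfold Wsum
  rw [show (1 : ℕ) = 0 + 1 from rfl, Icc_add_one_left_eq_Ioc, Icc_add_one_left_eq_Ioc]
  exact sum_Ioc_consecutive _ (Nat.zero_le a) h

def IsRestrictedDP {P : Type*} [PartialOrder P] (n : ℕ) (σ : ℕ → P) (w : ℕ → ℕ)
    (R : ℕ → Finset ℕ) (r : ℕ → ℕ) : Prop :=
  ∀ t, 1 ≤ t → t ≤ n + 1 →
    r t = sInf {v : ℕ | ∃ i ∈ R (t - 1), Arr n σ i t ∧ v = r i + (Wsum w (t - 1) - Wsum w i)}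

noncomputable def safeSet (n : ℕ) (R : ℕ → Finset ℕ) (C : Finset ℕ) : Finset ℕ :=
  C.filter fun i => ¬ Unsafe n R C i

section

variable {P : Type*} [PartialOrder P] {n : ℕ} {σ : ℕ → P} {w : ℕ → ℕ} {R : ℕ → Finset ℕ}
  {r : ℕ → ℕ} {C : Finset ℕ}

lemma IsRestrictedDP.le_add_of_arr (hr : IsRestrictedDP n σ w R r) {i t : ℕ} (ht1 : 1 ≤ t)
    (htn : t ≤ n + 1) (hi : i ∈ R (t - 1)) (harr : Arr n σ i t) :
    r t ≤ r i + (Wsum w (t - 1) - Wsum w i) := by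
  rw [hr t ht1 htn]
  exact Nat.sInf_le ⟨i, hi, harr, rfl⟩

lemma arr_of_mem_path (hC : C ⊆ Icc 1 n) (hCpath : ∀ i ∈ C, ∀ j ∈ C, i < j → σ i < σ j)
    {i j : ℕ} (hi : i ∈ C) (hj : j ∈ C ∨ j = n + 1) (hij : i < j) : Arr n σ i j := by
  have hi' := mem_Icc.mp (hC hi)
  rcases hj with hj | rfl
  · have hj' := mem_Icc.mp (hC hj)
    exact Or.inr (Or.inr ⟨hi'.1, hi'.2, hj'.1, hj'.2, hCpath i hi j hj hij⟩)
  · exact Or.inr (Or.inl ⟨hi'.1, hi'.2, rfl⟩)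

lemma exists_mem_R_of_not_unsafe {s t : ℕ} (hs : ¬ Unsafe n R C s) (hst : s ≤ t) (htn : t ≤ n) :
    ∃ j ∈ C, s ≤ j ∧ j ≤ t ∧ j ∈ R t := by
  by_contra! h
  exact hs ⟨t, hst, htn, h⟩

lemma mem_Icc_of_mem_or_eq_succ (hC : C ⊆ Icc 1 n) {j : ℕ} (hj : j ∈ C ∨ j = n + 1) :
    j ∈ Icc 1 (n + 1) := by
  rcases hj with hj | rfl
  · exact Icc_subset_Icc_right n.le_succ (hC hj)
  · simp

lemma IsRestrictedDP.le_add_of_mem_safeSet (hr : IsRestrictedDP n σ w R r)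
    (hR0 : ∀ t, t ≤ n → 0 ∈ R t) (hC : C ⊆ Icc 1 n)
    (hCpath : ∀ i ∈ C, ∀ j ∈ C, i < j → σ i < σ j) {s j : ℕ}
    (hs : s ∈ insert 0 (safeSet n R C)) (hsj : s < j) (hj : j ∈ C ∨ j = n + 1) :
    r j ≤ r s + (Wsum w (j - 1) - Wsum w s) := by
  induction j using Nat.strong_induction_on with
  | _ j IH =>
    obtain ⟨hj1, hjn⟩ := mem_Icc.mp (mem_Icc_of_mem_or_eq_succ hC hj)
    rcases mem_insert.mp hs with rfl | hs
    · exact hr.le_add_of_arr hj1 hjn (hR0 _ (by omega)) (Or.inl ⟨rfl, hj1, hjn⟩)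
    obtain ⟨hsC, hsafe⟩ := mem_filter.mp hs
    obtain ⟨k, hkC, hsk, hkj, hkR⟩ :=
      exists_mem_R_of_not_unsafe hsafe (by omega : s ≤ j - 1) (by omega)
    have hk_to_j := hr.le_add_of_arr hj1 hjn hkR (arr_of_mem_path hC hCpath hkC hj (by omega))
    rcases hsk.eq_or_lt with rfl | hsk
    · exact hk_to_j
    have hs_to_k := IH k (by omega) hsk (Or.inl hkC)
    have : Wsum w s ≤ Wsum w (k - 1) := Wsum_mono w (by omega)
    have : Wsum w (k - 1) ≤ Wsum w k := Wsum_mono w (by omega)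
    have : Wsum w k ≤ Wsum w (j - 1) := Wsum_mono w (by omega)
    omega

lemma sum_Icc_sdiff_eq_add (w : ℕ → ℕ) (S : Finset ℕ) {m k : ℕ} (hmk : m ≤ k)
    (hm : m ∈ insert 0 S) (hgap : ∀ x ∈ S, m < x → k < x) :
    ∑ x ∈ Icc 1 k \ S, w x = ∑ x ∈ Icc 1 (m - 1) \ S, w x + (Wsum w k - Wsum w m) := by
  have hsplit : Icc 1 k \ S = (Icc 1 (m - 1) \ S) ∪ Ioc m k := by
    ext x
    simp only [mem_union, mem_sdiff, mem_Icc, mem_Ioc]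
    have := hgap x
    rcases mem_insert.mp hm with rfl | hm <;> grind
  have hdisj : Disjoint (Icc 1 (m - 1) \ S) (Ioc m k) := by
    rw [disjoint_left]
    intro x hx hx'
    simp only [mem_sdiff, mem_Icc, mem_Ioc] at hx hx'
    omega
  rw [hsplit, sum_union hdisj, ← Wsum_add_sum_Ioc w hmk, Nat.add_sub_cancel_left]

lemma IsRestrictedDP.le_sum_Icc_sdiff_safeSet (hr : IsRestrictedDP n σ w R r)
    (hr0 : r 0 = 0) (hR0 : ∀ t, t ≤ n → 0 ∈ R t) (hC : C ⊆ Icc 1 n)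
    (hCpath : ∀ i ∈ C, ∀ j ∈ C, i < j → σ i < σ j) {j : ℕ} (hj : j ∈ C ∨ j = n + 1) :
    r j ≤ ∑ x ∈ Icc 1 (j - 1) \ safeSet n R C, w x := by
  induction j using Nat.strong_induction_on with
  | _ j IH =>
    have hj1 := (mem_Icc.mp (mem_Icc_of_mem_or_eq_succ hC hj)).1
    set S := safeSet n R C
    have hne : (insert 0 (S.filter (· < j))).Nonempty := insert_nonempty _ _
    -- the last safe index before `j`, or the sentinel `0`
    set m := (insert 0 (S.filter (· < j))).max' hne
    have hm_mem : m ∈ insert 0 (S.filter (· < j)) := max'_mem _ hne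
    have hm : m ∈ insert 0 S ∧ m < j := by
      rcases mem_insert.mp hm_mem with h | h
      · exact ⟨h ▸ mem_insert_self 0 S, by omega⟩
      · exact ⟨mem_insert_of_mem (mem_filter.mp h).1, (mem_filter.mp h).2⟩
    have hgap : ∀ x ∈ S, m < x → j - 1 < x := fun x hx hmx => by
      by_contra! hxj
      have : x ≤ m := le_max' (insert 0 (S.filter (· < j))) x
        (mem_insert_of_mem (mem_filter.mpr ⟨hx, by omega⟩))
      omega
    have hm_bound : r m ≤ ∑ x ∈ Icc 1 (m - 1) \ S, w x := by
      rcases mem_insert.mp hm.1 with h | h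
      · simp [h, hr0]
      · exact IH m hm.2 (Or.inl (mem_filter.mp h).1)
    have hm_to_j := hr.le_add_of_mem_safeSet hR0 hC hCpath hm.1 hm.2 hj
    rw [sum_Icc_sdiff_eq_add w S (by omega) hm.1 hgap]
    omega

lemma Icc_sdiff_safeSet (hC : C ⊆ Icc 1 n) :
    Icc 1 n \ safeSet n R C = (Icc 1 n \ C) ∪ C.filter (Unsafe n R C) := by
  ext x
  have := @hC x
  simp only [safeSet, mem_sdiff, mem_union, mem_filter]
  tauto

end

theorem restricted_dp_le_offpath_plus_unsafe_general {P : Type*} [PartialOrder P] (n : ℕ)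
    (σ : ℕ → P) (w : ℕ → ℕ)
    (R : ℕ → Finset ℕ)
    (hR0 : ∀ t, t ≤ n → 0 ∈ R t)
    (r : ℕ → ℕ) (hr0 : r 0 = 0)
    (hr : ∀ t, 1 ≤ t → t ≤ n + 1 →
      r t = sInf {v : ℕ | ∃ i ∈ R (t - 1), Arr n σ i t ∧
        v = r i + (Wsum w (t - 1) - Wsum w i)})
    (C : Finset ℕ) (hC : C ⊆ Finset.Icc 1 n)
    (hCpath : ∀ i ∈ C, ∀ j ∈ C, i < j → σ i < σ j) :
    r (n + 1) ≤ ∑ j ∈ (Finset.Icc 1 n \ C) ∪ C.filter (Unsafe n R C), w j := by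
  have h := IsRestrictedDP.le_sum_Icc_sdiff_safeSet hr hr0 hR0 hC hCpath (Or.inr rfl)
  rwa [Nat.add_sub_cancel, Icc_sdiff_safeSet hC] at h

/-- With remembered sets `R^t ⊆ {0,…,t}`, `0 ∈ R^t`, satisfying
`R^t ∩ {0,…,t-1} ⊆ R^{t-1}` (a forgotten index stays forgotten), and `r` the restricted
dynamic program, for any σ-path `C ⊆ {1,…,n}` with unsafe set `U`, the output satisfies
`r (n+1) ≤ w(C̄ ∪ U)`. -/
theorem restricted_dp_le_offpath_plus_unsafe {P : Type*} [PartialOrder P] (n : ℕ)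
    (σ : ℕ → P) (w : ℕ → ℕ) (hw : w (n + 1) = 0)
    (R : ℕ → Finset ℕ)
    (hRsub : ∀ t, t ≤ n → R t ⊆ Finset.range (t + 1))
    (hR0 : ∀ t, t ≤ n → 0 ∈ R t)
    (hRmono : ∀ t, 1 ≤ t → t ≤ n → R t ∩ Finset.range t ⊆ R (t - 1))
    (r : ℕ → ℕ) (hr0 : r 0 = 0)
    (hr : ∀ t, 1 ≤ t → t ≤ n + 1 →
      r t = sInf {v : ℕ | ∃ i ∈ R (t - 1), Arr n σ i t ∧
        v = r i + (Wsum w (t - 1) - Wsum w i)})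
    (C : Finset ℕ) (hC : C ⊆ Finset.Icc 1 n)
    (hCpath : ∀ i ∈ C, ∀ j ∈ C, i < j → σ i < σ j) :
    r (n + 1) ≤ ∑ j ∈ (Finset.Icc 1 n \ C) ∪ C.filter (Unsafe n R C), w j :=
  restricted_dp_le_offpath_plus_unsafe_general n σ w R hR0 r hr0 hr C hC hCpath
end

section
/- Every index i ∈ C̄ = {1,…,n} ∖ C is dangerous. Moreover, there exists a finite sequence I_1, I_2, …, I_ℓ of pairwise disjoint dangerous intervals, each lying entirely to the right of the previous one, such that every dangerous index belongs to I_1 ∪ ⋯ ∪ I_ℓ; in particular C̄ ⊆ I_1 ∪ ⋯ ∪ I_ℓ. -/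
/-- The interval `[i,j] ⊆ {1,…,n}` is dangerous (w.r.t. `C`, `w`, `δ`):
`w(C ∩ [i,j]) ≤ (δ/(1+δ))·w([i,j])`. -/
def DangerousInterval (n : ℕ) (w : ℕ → ℝ) (C : Finset ℕ) (δ : ℝ) (i j : ℕ) : Prop :=
  1 ≤ i ∧ i ≤ j ∧ j ≤ n ∧
    ∑ k ∈ C ∩ Finset.Icc i j, w k ≤ (δ / (1 + δ)) * ∑ k ∈ Finset.Icc i j, w k

/-- The index `i` is dangerous if it is the left endpoint of some dangerous interval. -/
def DangerousIndex (n : ℕ) (w : ℕ → ℝ) (C : Finset ℕ) (δ : ℝ) (i : ℕ) : Prop :=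
  ∃ j, DangerousInterval n w C δ i j

/-!
A singleton `[i,i]` with `i ∉ C` carries no weight of `C`, so it is dangerous. For the cover,
scan greedily from the left: take the leftmost dangerous index `a` not yet covered together with
any dangerous interval `[a,b]` starting there, and restart the scan at `b + 1`. Every dangerous
index skipped by the scan lies in some `[a,b]` by the minimality of `a`.
-/

theorem dangerousInterval_self {n : ℕ} {w : ℕ → ℝ} {C : Finset ℕ} {δ : ℝ} {i : ℕ}
    (hδ : 0 ≤ δ) (hi : i ∈ Finset.Icc 1 n \ C) (hwi : 0 ≤ w i) :
    DangerousInterval n w C δ i i := by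
  obtain ⟨hi, hiC⟩ := Finset.mem_sdiff.mp hi
  obtain ⟨h1i, hin⟩ := Finset.mem_Icc.mp hi
  have hdisj : C ∩ Finset.Icc i i = ∅ := by
    rw [Finset.Icc_self, Finset.inter_singleton_of_notMem hiC]
  refine ⟨h1i, le_rfl, hin, ?_⟩
  rw [hdisj, Finset.sum_empty, Finset.Icc_self, Finset.sum_singleton]
  positivity

section GreedyCover

variable (R : ℕ → ℕ → Prop) (n : ℕ)

theorem exists_increasing_cover_from (hR : ∀ i j, R i j → i ≤ j ∧ j ≤ n) (s : ℕ) :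
    ∃ (ℓ : ℕ) (a b : ℕ → ℕ),
      (∀ k, k < ℓ → R (a k) (b k) ∧ s ≤ a k) ∧
      (∀ k, k + 1 < ℓ → b k < a (k + 1)) ∧
      (∀ i, s ≤ i → (∃ j, R i j) → ∃ k, k < ℓ ∧ a k ≤ i ∧ i ≤ b k) := by
  classical
  by_cases h : ∃ i, s ≤ i ∧ ∃ j, R i j
  · obtain ⟨hsa, b₀, hab₀⟩ := Nat.find_spec h
    set a₀ := Nat.find h
    have ha₀b₀ := hR _ _ hab₀
    obtain ⟨ℓ, a, b, hrest, hchain, hcov⟩ := exists_increasing_cover_from hR (b₀ + 1)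
    refine ⟨ℓ + 1, fun | 0 => a₀ | k + 1 => a k, fun | 0 => b₀ | k + 1 => b k, ?_, ?_, ?_⟩
    · rintro (_ | k) hk
      · exact ⟨hab₀, hsa⟩
      · obtain ⟨habk, hsak⟩ := hrest k (by omega)
        exact ⟨habk, by dsimp only; omega⟩
    · rintro (_ | k) hk
      · exact (hrest 0 (by omega)).2
      · exact hchain k (by omega)
    · intro i hsi hi
      rcases le_or_gt i b₀ with hib₀ | hb₀i
      · exact ⟨0, by omega, Nat.find_min' h ⟨hsi, hi⟩, hib₀⟩
      · obtain ⟨k, hk, hak, hbk⟩ := hcov i hb₀i hi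
        exact ⟨k + 1, by omega, hak, hbk⟩
  · refine ⟨0, id, id, by omega, by omega, fun i hsi hi => (h ⟨i, hsi, hi⟩).elim⟩
termination_by n + 1 - s
decreasing_by omega

theorem exists_increasing_cover (hR : ∀ i j, R i j → i ≤ j ∧ j ≤ n) :
    ∃ (ℓ : ℕ) (a b : ℕ → ℕ),
      (∀ k, k < ℓ → R (a k) (b k)) ∧
      (∀ k, k + 1 < ℓ → b k < a (k + 1)) ∧
      (∀ i, (∃ j, R i j) → ∃ k, k < ℓ ∧ a k ≤ i ∧ i ≤ b k) := by
  obtain ⟨ℓ, a, b, hrest, hchain, hcov⟩ := exists_increasing_cover_from R n hR 0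
  exact ⟨ℓ, a, b, fun k hk => (hrest k hk).1, hchain, fun i => hcov i i.zero_le⟩

end GreedyCover

theorem dangerous_intervals_cover_general (n : ℕ) (w : ℕ → ℝ)
    (hw : ∀ i, 1 ≤ i → i ≤ n → 0 ≤ w i)
    (C : Finset ℕ) (δ : ℝ) (hδ : 0 < δ) :
    (∀ i ∈ Finset.Icc 1 n \ C, DangerousIndex n w C δ i) ∧
    ∃ (ℓ : ℕ) (a b : ℕ → ℕ),
      (∀ k, k < ℓ → DangerousInterval n w C δ (a k) (b k)) ∧
      (∀ k, k + 1 < ℓ → b k < a (k + 1)) ∧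
      (∀ i, DangerousIndex n w C δ i → ∃ k, k < ℓ ∧ a k ≤ i ∧ i ≤ b k) := by
  refine ⟨fun i hi => ⟨i, dangerousInterval_self hδ.le hi ?_⟩,
    exists_increasing_cover _ n fun _ _ h => ⟨h.2.1, h.2.2.1⟩⟩
  obtain ⟨h1i, hin⟩ := Finset.mem_Icc.mp (Finset.mem_sdiff.mp hi).1
  exact hw i h1i hin

/-- Every index `i ∈ {1,…,n} ∖ C` is dangerous, and there exists a
finite sequence `I_1, …, I_ℓ` of dangerous intervals `[a k, b k]`, each lying entirely
to the right of the previous one (hence pairwise disjoint), whose union contains every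
dangerous index; in particular it contains `C̄`. -/
theorem dangerous_intervals_cover (n : ℕ) (hn : 1 ≤ n) (w : ℕ → ℝ)
    (hw : ∀ i, 1 ≤ i → i ≤ n → 0 ≤ w i)
    (C : Finset ℕ) (hC : C ⊆ Finset.Icc 1 n) (δ : ℝ) (hδ : 0 < δ) :
    (∀ i ∈ Finset.Icc 1 n \ C, DangerousIndex n w C δ i) ∧
    ∃ (ℓ : ℕ) (a b : ℕ → ℕ),
      (∀ k, k < ℓ → DangerousInterval n w C δ (a k) (b k)) ∧
      (∀ k, k + 1 < ℓ → b k < a (k + 1)) ∧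
      (∀ i, DangerousIndex n w C δ i → ∃ k, k < ℓ ∧ a k ≤ i ∧ i ≤ b k) :=
  dangerous_intervals_cover_general n w hw C δ hδ
end

section
/- Let δ > 0, let γ ∈ (0,1], let w(1),…,w(n) be positive reals with partial sums W(0) = 0, W(t) = w(1)+⋯+w(t), let C ⊆ {1,…,n}, and fix t ∈ {1,…,n} and i ∈ {1,…,t}. For j ≤ t define q(j,t) = min{ 1, ((1+δ)/δ)·ln(4t³/γ)·w(j)/(W(t) − W(j−1)) }. If the interval [i,t] is not dangerous, i.e. w(C ∩ [i,t]) > (δ/(1+δ))·w([i,t]), then ∏_{j ∈ C ∩ [i,t]} (1 − q(j,t)) ≤ γ/(4t³). -/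
/-!
Write `T(j) = w([j,t]) = W(t) − W(j−1)` and `L = ((1+δ)/δ)·ln(4t³/γ)`, so that `q(j,t) = min{1, L·w(j)/T(j)}`.
Pointwise `1 − min{1, a} ≤ e^{−a}`, hence the product is at most `exp(−Σ_{j∈C∩[i,t]} L·w(j)/T(j))`.
Since `T(j) ≤ T(i)` for `j ≥ i`, the exponent is at least `L·w(C ∩ [i,t])/T(i) > L·δ/(1+δ) = ln(4t³/γ)`.
-/

open Finset Real

theorem one_sub_min_one_le_exp_neg (a : ℝ) : 1 - min 1 a ≤ exp (-a) := by
  rcases le_total a 1 with ha | ha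
  · rw [min_eq_right ha]
    linarith [add_one_le_exp (-a)]
  · rw [min_eq_left ha, sub_self]
    positivity

theorem prod_one_sub_min_one_le_exp_neg_sum {ι : Type*} (s : Finset ι) (a : ι → ℝ) :
    ∏ j ∈ s, (1 - min 1 (a j)) ≤ exp (-∑ j ∈ s, a j) := by
  rw [← sum_neg_distrib, exp_sum]
  exact prod_le_prod (fun j _ ↦ sub_nonneg.2 (min_le_left _ _))
    fun j _ ↦ one_sub_min_one_le_exp_neg (a j)

theorem sum_Icc_one_sub_sum_Icc_one (w : ℕ → ℝ) {j t : ℕ} (hj : 1 ≤ j) (hjt : j ≤ t + 1) :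
    ∑ k ∈ Icc 1 t, w k - ∑ k ∈ Icc 1 (j - 1), w k = ∑ k ∈ Icc j t, w k := by
  have hIoc (a b : ℕ) : Icc (a + 1) b = Ioc a b := Icc_add_one_left_eq_Ioc a b
  obtain ⟨j, rfl⟩ := Nat.exists_eq_add_of_le' hj
  simp only [Nat.add_sub_cancel, hIoc]
  rw [← sum_Ioc_consecutive w (Nat.zero_le j) (by omega), add_sub_cancel_left]

theorem sum_div_sum_Icc_le_sum_div_sum_Icc (w : ℕ → ℝ) {i t : ℕ} {S : Finset ℕ}
    (hS : S ⊆ Icc i t) (hw : ∀ j ∈ Icc i t, 0 < w j) :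
    (∑ j ∈ S, w j) / ∑ k ∈ Icc i t, w k ≤ ∑ j ∈ S, w j / ∑ k ∈ Icc j t, w k := by
  rw [sum_div]
  refine sum_le_sum fun j hj ↦ ?_
  have hjit := hS hj
  have hij : i ≤ j := (mem_Icc.1 hjit).1
  have htail_pos : 0 < ∑ k ∈ Icc j t, w k :=
    sum_pos (fun k hk ↦ hw k (Icc_subset_Icc_left hij hk)) ⟨j, mem_Icc.2 ⟨le_rfl, (mem_Icc.1 hjit).2⟩⟩
  refine div_le_div_of_nonneg_left (hw j hjit).le htail_pos ?_
  exact sum_le_sum_of_subset_of_nonneg (Icc_subset_Icc_left hij) fun k hk _ ↦ (hw k hk).le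

theorem unsafe_probability_bound_general (n : ℕ) (δ γ : ℝ) (hδ : 0 < δ) (hγ0 : 0 < γ)
    (hγ1 : γ ≤ 1)
    (w : ℕ → ℝ) (hw : ∀ j, 1 ≤ j → j ≤ n → 0 < w j)
    (W : ℕ → ℝ) (hW : ∀ k, W k = ∑ j ∈ Finset.Icc 1 k, w j)
    (C : Finset ℕ)
    (t : ℕ) (htn : t ≤ n)
    (i : ℕ) (hi1 : 1 ≤ i) (hit : i ≤ t)
    (q : ℕ → ℕ → ℝ)
    (hq : ∀ j, 1 ≤ j → j ≤ t →
      q j t = min 1 (((1 + δ) / δ) * Real.log (4 * t ^ 3 / γ) * w j / (W t - W (j - 1))))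
    (hnd : (δ / (1 + δ)) * (W t - W (i - 1)) < ∑ j ∈ C ∩ Finset.Icc i t, w j) :
    ∏ j ∈ C ∩ Finset.Icc i t, (1 - q j t) ≤ γ / (4 * t ^ 3) := by
  set S := C ∩ Icc i t
  set X : ℝ := 4 * t ^ 3 / γ
  set L := (1 + δ) / δ * log X
  have hX : 1 ≤ X := by
    have ht : (1 : ℝ) ≤ t := by exact_mod_cast hi1.trans hit
    rw [le_div_iff₀ hγ0]
    nlinarith [one_le_pow₀ (n := 3) ht]
  have hwpos : ∀ j ∈ Icc i t, 0 < w j := fun j hj ↦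
    hw j (hi1.trans (mem_Icc.1 hj).1) ((mem_Icc.1 hj).2.trans htn)
  have htail : ∀ j, 1 ≤ j → j ≤ t → W t - W (j - 1) = ∑ k ∈ Icc j t, w k := fun j hj hjt ↦ by
    rw [hW, hW, sum_Icc_one_sub_sum_Icc_one w hj (by omega)]
  have hq_tail : ∀ j ∈ S, q j t = min 1 (L * (w j / ∑ k ∈ Icc j t, w k)) := fun j hj ↦ by
    have hjit := mem_Icc.1 (mem_inter.1 hj).2
    rw [hq j (hi1.trans hjit.1) hjit.2, htail j (hi1.trans hjit.1) hjit.2, mul_div_assoc]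
  have hratio : δ / (1 + δ) ≤ ∑ j ∈ S, w j / ∑ k ∈ Icc j t, w k := by
    rw [htail i hi1 hit] at hnd
    have hD : 0 < ∑ k ∈ Icc i t, w k := sum_pos hwpos ⟨i, mem_Icc.2 ⟨le_rfl, hit⟩⟩
    exact ((le_div_iff₀ hD).2 hnd.le).trans
      (sum_div_sum_Icc_le_sum_div_sum_Icc w inter_subset_right hwpos)
  have hL : 0 ≤ L := mul_nonneg (by positivity) (log_nonneg hX)
  have hLX : L * (δ / (1 + δ)) = log X := by simp only [L]; field_simp
  calc ∏ j ∈ S, (1 - q j t) = ∏ j ∈ S, (1 - min 1 (L * (w j / ∑ k ∈ Icc j t, w k))) :=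
        prod_congr rfl fun j hj ↦ by rw [hq_tail j hj]
    _ ≤ exp (-∑ j ∈ S, L * (w j / ∑ k ∈ Icc j t, w k)) := prod_one_sub_min_one_le_exp_neg_sum _ _
    _ ≤ exp (-(L * (δ / (1 + δ)))) := by rw [← mul_sum]; gcongr
    _ = γ / (4 * t ^ 3) := by rw [hLX, exp_neg, exp_log (by linarith), inv_div]

/-- With `q(j,t) = min{1, ((1+δ)/δ)·ln(4t³/γ)·w(j)/(W(t) − W(j−1))}`,
if the interval `[i,t]` is not dangerous, i.e. `w(C ∩ [i,t]) > (δ/(1+δ))·w([i,t])`,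
then `∏_{j ∈ C ∩ [i,t]} (1 − q(j,t)) ≤ γ/(4t³)`. -/
theorem unsafe_probability_bound (n : ℕ) (δ γ : ℝ) (hδ : 0 < δ) (hγ0 : 0 < γ)
    (hγ1 : γ ≤ 1)
    (w : ℕ → ℝ) (hw : ∀ j, 1 ≤ j → j ≤ n → 0 < w j)
    (W : ℕ → ℝ) (hW0 : W 0 = 0) (hW : ∀ k, W k = ∑ j ∈ Finset.Icc 1 k, w j)
    (C : Finset ℕ) (hC : C ⊆ Finset.Icc 1 n)
    (t : ℕ) (ht1 : 1 ≤ t) (htn : t ≤ n)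
    (i : ℕ) (hi1 : 1 ≤ i) (hit : i ≤ t)
    (q : ℕ → ℕ → ℝ)
    (hq : ∀ j, 1 ≤ j → j ≤ t →
      q j t = min 1 (((1 + δ) / δ) * Real.log (4 * t ^ 3 / γ) * w j / (W t - W (j - 1))))
    (hnd : (δ / (1 + δ)) * (W t - W (i - 1)) < ∑ j ∈ C ∩ Finset.Icc i t, w j) :
    ∏ j ∈ C ∩ Finset.Icc i t, (1 - q j t) ≤ γ / (4 * t ^ 3) :=
  unsafe_probability_bound_general n δ γ hδ hγ0 hγ1 w hw W hW C t htn i hi1 hit q hq hnd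
end

section
/- Let n ≥ 1, let t ∈ {1,…,n}, let δ ∈ (0,1], let γ ∈ (0,1], let w(1),…,w(n) be positive integers with partial sums W(0) = 0, W(i) = w(1)+⋯+w(i), and let ρ = W(n) = Σ_{i=1}^n w(i). For i ≤ t define q(i,t) = min{ 1, ((1+δ)/δ)·ln(4t³/γ)·w(i)/(W(t) − W(i−1)) }. Then Σ_{i=1}^{t} q(i,t) ≤ (2/δ)·ln(4n³/γ)·ln(e·ρ). -/
/-!
Bounding each `min` by its second argument, the sum becomes `C · Σ w(i)/a(i)` with the tails
`a(i) = W(t) − W(i−1)`, and `w(i)/a(i) = 1 − a(i+1)/a(i) ≤ log a(i) − log a(i+1)` since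
`1 − 1/x ≤ log x`. The sum telescopes except for its last term `w(t)/a(t) = 1`, giving
`1 + log W(t) − log w(t) ≤ 1 + log ρ = log (e ρ)`, as integer weights are at least `1`.
Finally `(1 + δ)/δ ≤ 2/δ` and `t ≤ n` bound the constant `C`.
-/

open Finset Real

lemma sub_div_le_log_sub_log {a b : ℝ} (ha : 0 < a) (hb : 0 < b) :
    (a - b) / a ≤ log a - log b := by
  have h := one_sub_inv_le_log_of_pos (div_pos ha hb)
  rwa [inv_div, log_div ha.ne' hb.ne', one_sub_div ha.ne'] at h

lemma sum_Ico_sub_div_le_log_sub_log {a : ℕ → ℝ} {m k : ℕ} (hmk : m ≤ k)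
    (ha : ∀ i ∈ Icc m k, 0 < a i) :
    ∑ i ∈ Ico m k, (a i - a (i + 1)) / a i ≤ log (a m) - log (a k) := by
  calc ∑ i ∈ Ico m k, (a i - a (i + 1)) / a i
      ≤ ∑ i ∈ Ico m k, (-log (a (i + 1)) - -log (a i)) := by
        refine sum_le_sum fun i hi => ?_
        have hi := mem_Ico.1 hi
        rw [neg_sub_neg]
        exact sub_div_le_log_sub_log (ha i (by simp; omega)) (ha (i + 1) (by simp; omega))
    _ = log (a m) - log (a k) := by rw [sum_Ico_sub (fun i => -log (a i)) hmk]; ring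

lemma sum_div_sum_Icc_le_one_add_log {w : ℕ → ℝ} {m t : ℕ} (hmt : m ≤ t)
    (hw : ∀ i ∈ Icc m t, 1 ≤ w i) :
    ∑ i ∈ Icc m t, w i / ∑ j ∈ Icc i t, w j ≤ 1 + log (∑ j ∈ Icc m t, w j) := by
  set T : ℕ → ℝ := fun i => ∑ j ∈ Icc i t, w j with hT
  have hT_pos : ∀ i ∈ Icc m t, 0 < T i := fun i hi => by
    have hii : i ∈ Icc i t := by simp; exact (mem_Icc.1 hi).2
    have := single_le_sum (fun j hj => zero_le_one.trans (hw j (by simp at hi hj ⊢; omega))) hii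
    linarith [hw i hi]
  have hT_sub : ∀ i ∈ Ico m t, w i = T i - T (i + 1) := fun i hi => by
    simp only [hT, ← add_sum_Ioc_eq_sum_Icc (mem_Ico.1 hi).2.le, Icc_add_one_left_eq_Ioc]
    ring
  have hTt : T t = w t := by simp [hT]
  calc ∑ i ∈ Icc m t, w i / T i
      = ∑ i ∈ Ico m t, (T i - T (i + 1)) / T i + 1 := by
        rw [← Ico_insert_right hmt, sum_insert (by simp), add_comm, hTt,
          div_self (by linarith [hw t (by simp [hmt])])]
        exact congrArg (· + 1) (sum_congr rfl fun i hi => by rw [hT_sub i hi])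
    _ ≤ log (T m) - log (T t) + 1 := by gcongr; exact sum_Ico_sub_div_le_log_sub_log hmt hT_pos
    _ ≤ 1 + log (T m) := by linarith [log_nonneg (hTt ▸ hw t (by simp [hmt]))]

lemma sum_Icc_one_sub_sum_Icc_one_s10 {M : Type*} [AddCommGroup M] (f : ℕ → M) {i t : ℕ}
    (hi : 1 ≤ i) (hit : i ≤ t) :
    ∑ j ∈ Icc 1 t, f j - ∑ j ∈ Icc 1 (i - 1), f j = ∑ j ∈ Icc i t, f j := by
  obtain ⟨k, rfl⟩ : ∃ k, i = k + 1 := ⟨i - 1, by omega⟩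
  have hIcc_one : ∀ b : ℕ, Icc 1 b = Ioc 0 b := Icc_add_one_left_eq_Ioc 0
  rw [add_tsub_cancel_right, hIcc_one, hIcc_one, Icc_add_one_left_eq_Ioc,
    ← sum_Ioc_consecutive f (Nat.zero_le k) (by omega : k ≤ t), add_sub_cancel_left]

lemma log_four_mul_pow_div_nonneg {γ : ℝ} {t : ℕ} (hγ0 : 0 < γ) (hγ1 : γ ≤ 1) (ht : 1 ≤ t) :
    0 ≤ log (4 * t ^ 3 / γ) := by
  apply log_nonneg
  rw [le_div_iff₀ hγ0]
  have : (1 : ℝ) ≤ t ^ 3 := one_le_pow₀ (by exact_mod_cast ht)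
  linarith

lemma one_add_div_mul_log_le {δ γ : ℝ} {t n : ℕ} (hδ0 : 0 < δ) (hδ1 : δ ≤ 1) (hγ0 : 0 < γ)
    (hγ1 : γ ≤ 1) (ht : 1 ≤ t) (htn : t ≤ n) :
    (1 + δ) / δ * log (4 * t ^ 3 / γ) ≤ 2 / δ * log (4 * n ^ 3 / γ) := by
  have : (1 : ℝ) ≤ t := by exact_mod_cast ht
  gcongr
  · exact log_four_mul_pow_div_nonneg hγ0 hγ1 ht
  · linarith

theorem expected_remembered_le_general (n t : ℕ) (ht1 : 1 ≤ t) (htn : t ≤ n)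
    (δ γ : ℝ) (hδ0 : 0 < δ) (hδ1 : δ ≤ 1) (hγ0 : 0 < γ) (hγ1 : γ ≤ 1)
    (w : ℕ → ℕ) (hw : ∀ i, 1 ≤ i → i ≤ n → 0 < w i)
    (W : ℕ → ℕ) (hW : ∀ k, W k = ∑ j ∈ Finset.Icc 1 k, w j)
    (ρ : ℕ) (hρ : ρ = W n)
    (q : ℕ → ℕ → ℝ)
    (hq : ∀ i, 1 ≤ i → i ≤ t → q i t = min 1 (((1 + δ) / δ) * Real.log (4 * t ^ 3 / γ) *
      (w i : ℝ) / ((W t : ℝ) - (W (i - 1) : ℝ)))) :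
    ∑ i ∈ Finset.Icc 1 t, q i t ≤
      (2 / δ) * Real.log (4 * n ^ 3 / γ) * Real.log (Real.exp 1 * ρ) := by
  set C := (1 + δ) / δ * log (4 * t ^ 3 / γ)
  have hC : 0 ≤ C := mul_nonneg (by positivity) (log_four_mul_pow_div_nonneg hγ0 hγ1 ht1)
  have hWcast : ∀ k, (W k : ℝ) = ∑ j ∈ Icc 1 k, (w j : ℝ) := fun k => by rw [hW]; push_cast; rfl
  have hw1 : ∀ i ∈ Icc 1 t, 1 ≤ (w i : ℝ) := fun i hi => by
    rw [mem_Icc] at hi; exact_mod_cast hw i hi.1 (hi.2.trans htn)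
  have hWt : 1 ≤ (W t : ℝ) :=
    (hw1 t (by simp [ht1])).trans ((hWcast t).symm ▸ single_le_sum
      (fun j hj => zero_le_one.trans (hw1 j hj)) (by simp [ht1]))
  have hWρ : (W t : ℝ) ≤ ρ := by
    rw [hρ, hW, hW]; exact_mod_cast sum_le_sum_of_subset (Icc_subset_Icc_right htn)
  calc ∑ i ∈ Icc 1 t, q i t
      ≤ ∑ i ∈ Icc 1 t, C * ((w i : ℝ) / ∑ j ∈ Icc i t, (w j : ℝ)) := by
        refine sum_le_sum fun i hi => ?_
        obtain ⟨hi1, hit⟩ := mem_Icc.1 hi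
        rw [hq i hi1 hit, hWcast, hWcast, sum_Icc_one_sub_sum_Icc_one_s10 _ hi1 hit, mul_div_assoc]
        exact min_le_right _ _
    _ ≤ C * (1 + log (W t)) := by
        rw [← mul_sum, hWcast]; gcongr; exact sum_div_sum_Icc_le_one_add_log ht1 hw1
    _ ≤ 2 / δ * log (4 * n ^ 3 / γ) * (1 + log ρ) := by
        refine mul_le_mul (one_add_div_mul_log_le hδ0 hδ1 hγ0 hγ1 ht1 htn) ?_
          (by linarith [log_nonneg hWt])
          (mul_nonneg (by positivity) (log_four_mul_pow_div_nonneg hγ0 hγ1 (ht1.trans htn)))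
        linarith [log_le_log (by linarith) hWρ]
    _ = 2 / δ * log (4 * n ^ 3 / γ) * log (exp 1 * ρ) := by
        rw [log_mul (exp_pos 1).ne' (by linarith), log_exp]

/-- With positive integer weights `w`, partial sums `W`,
`ρ = W(n)`, and `q(i,t) = min{1, ((1+δ)/δ)·ln(4t³/γ)·w(i)/(W(t) − W(i−1))}`,
we have `Σ_{i=1}^{t} q(i,t) ≤ (2/δ)·ln(4n³/γ)·ln(e·ρ)`. -/
theorem expected_remembered_le (n t : ℕ) (hn : 1 ≤ n) (ht1 : 1 ≤ t) (htn : t ≤ n)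
    (δ γ : ℝ) (hδ0 : 0 < δ) (hδ1 : δ ≤ 1) (hγ0 : 0 < γ) (hγ1 : γ ≤ 1)
    (w : ℕ → ℕ) (hw : ∀ i, 1 ≤ i → i ≤ n → 0 < w i)
    (W : ℕ → ℕ) (hW : ∀ k, W k = ∑ j ∈ Finset.Icc 1 k, w j)
    (ρ : ℕ) (hρ : ρ = W n)
    (q : ℕ → ℕ → ℝ)
    (hq : ∀ i, 1 ≤ i → i ≤ t → q i t = min 1 (((1 + δ) / δ) * Real.log (4 * t ^ 3 / γ) *
      (w i : ℝ) / ((W t : ℝ) - (W (i - 1) : ℝ)))) :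
    ∑ i ∈ Finset.Icc 1 t, q i t ≤
      (2 / δ) * Real.log (4 * n ^ 3 / γ) * Real.log (Real.exp 1 * ρ) :=
  expected_remembered_le_general n t ht1 htn δ γ hδ0 hδ1 hγ0 hγ1 w hw W hW ρ hρ q hq
end

section
/- Let n ≥ 1, let t ∈ {1,…,n}, let δ ∈ (0,1], let γ ∈ (0,1], let w(1),…,w(n) be positive integers with partial sums W(0) = 0, W(i) = w(1)+⋯+w(i), and let ρ = Σ_{i=1}^n w(i). For i ≤ t define q(i,t) = min{ 1, ((1+δ)/δ)·ln(4t³/γ)·w(i)/(W(t) − W(i−1)) }, and let M = (2/δ)·ln(4n³/γ)·ln(e·ρ). If Z_1,…,Z_t are independent random variables with Z_i taking the value 1 with probability q(i,t) and 0 otherwise, then Prob[ Σ_{i=1}^t Z_i ≥ e²·M ] ≤ γ/(2n). -/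
/-!
Chernoff's bound with parameter `1` bounds the probability by `exp ((e - 1) μ - e² M)`, where
`μ = Σ q(i,t)` is the mean of the sum. The elementary inequality `1 - 1/x ≤ ln x` gives
`w(i) / (W(t) - W(i-1)) ≤ ln (W(t) - W(i-1)) - ln (W(t) - W(i))` for `i < t`, so the sum
telescopes and `μ ≤ ((1+δ)/δ) ln(4t³/γ) ln(e W(t)) ≤ M`. The probability is therefore
at most `exp (-M) ≤ γ/(2n)`, because `M ≥ ln(2n/γ)`.
-/

open MeasureTheory ProbabilityTheory Real Finset

lemma sub_div_sub_le_log_sub_log {x y T : ℝ} (hxy : x ≤ y) (hyT : y < T) :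
    (y - x) / (T - x) ≤ log (T - x) - log (T - y) := by
  have hb : 0 < T - y := sub_pos.2 hyT
  have ha : 0 < T - x := by linarith
  have h := one_sub_inv_le_log_of_pos (div_pos ha hb)
  rw [inv_div, log_div ha.ne' hb.ne'] at h
  calc (y - x) / (T - x) = 1 - (T - y) / (T - x) := by field_simp; ring
    _ ≤ _ := h

lemma sum_sub_div_sub_le_log_sub_log {a : ℕ → ℝ} (ha : Monotone a) {T : ℝ} {s : ℕ}
    (hs : a s < T) :
    ∑ i ∈ range s, (a (i + 1) - a i) / (T - a i) ≤ log (T - a 0) - log (T - a s) :=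
  calc ∑ i ∈ range s, (a (i + 1) - a i) / (T - a i)
      ≤ ∑ i ∈ range s, (log (T - a i) - log (T - a (i + 1))) :=
        sum_le_sum fun i hi =>
          sub_div_sub_le_log_sub_log (ha i.le_succ) ((ha (mem_range.1 hi)).trans_lt hs)
    _ = log (T - a 0) - log (T - a s) := sum_range_sub' _ _

lemma sum_sub_div_sub_le_one_add_log {a : ℕ → ℝ} (ha : Monotone a) (ha0 : a 0 = 0) {s : ℕ}
    (hs : a s + 1 ≤ a (s + 1)) :
    ∑ i ∈ range (s + 1), (a (i + 1) - a i) / (a (s + 1) - a i) ≤ 1 + log (a (s + 1)) := by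
  have hlast : (a (s + 1) - a s) / (a (s + 1) - a s) = 1 := div_self (by linarith)
  have hgap : 0 ≤ log (a (s + 1) - a s) := log_nonneg (by linarith)
  have htelescope := sum_sub_div_sub_le_log_sub_log ha (T := a (s + 1)) (s := s) (by linarith)
  rw [ha0, sub_zero] at htelescope
  rw [sum_range_succ, hlast]
  linarith

lemma one_le_log_exp_mul {x : ℝ} (hx : 1 ≤ x) : 1 ≤ log (exp 1 * x) := by
  rw [log_mul (exp_ne_zero 1) (zero_lt_one.trans_le hx).ne', log_exp]
  linarith [log_nonneg hx]

section PartialSums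

variable {w W : ℕ → ℕ}

lemma monotone_of_eq_sum_Icc (hW : ∀ k, W k = ∑ j ∈ Icc 1 k, w j) : Monotone W :=
  fun a b hab => by
    simp only [hW]
    exact sum_le_sum_of_subset (Icc_subset_Icc_right hab)

lemma succ_eq_add_of_eq_sum_Icc (hW : ∀ k, W k = ∑ j ∈ Icc 1 k, w j) (k : ℕ) :
    W (k + 1) = W k + w (k + 1) := by
  simp only [hW]
  exact sum_Icc_succ_top (Nat.le_add_left 1 k) w

lemma le_of_eq_sum_Icc (hW : ∀ k, W k = ∑ j ∈ Icc 1 k, w j) {k : ℕ} (hk : 1 ≤ k) :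
    w k ≤ W k :=
  hW k ▸ single_le_sum (fun _ _ => Nat.zero_le _) (right_mem_Icc.2 hk)

lemma sum_div_sub_le_log_exp_mul (hW : ∀ k, W k = ∑ j ∈ Icc 1 k, w j) {t : ℕ} (ht : 1 ≤ t)
    (hwt : 0 < w t) :
    ∑ i ∈ range t, (w (i + 1) : ℝ) / (W t - W i) ≤ log (exp 1 * W t) := by
  obtain ⟨s, rfl⟩ := Nat.exists_eq_add_of_le' ht
  have hstep i : (w (i + 1) : ℝ) = W (i + 1) - W i := by
    rw [succ_eq_add_of_eq_sum_Icc hW]; push_cast; ring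
  have hlast : W s + 1 ≤ W (s + 1) := by
    rw [succ_eq_add_of_eq_sum_Icc hW]; omega
  simp only [hstep]
  rw [log_mul (exp_ne_zero 1) (Nat.cast_ne_zero.2 (by omega)), log_exp]
  refine sum_sub_div_sub_le_one_add_log (a := fun i => (W i : ℝ)) ?_ ?_ (by exact_mod_cast hlast)
  · exact Nat.mono_cast.comp (monotone_of_eq_sum_Icc hW)
  · simp [hW]

lemma sum_le_two_div_mul_log_mul_log (hW : ∀ k, W k = ∑ j ∈ Icc 1 k, w j) {n t : ℕ}
    (ht1 : 1 ≤ t) (htn : t ≤ n) (hwt : 0 < w t) {ρ : ℕ} (hWρ : W t ≤ ρ) {δ γ : ℝ}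
    (hδ0 : 0 < δ) (hδ1 : δ ≤ 1) (hγ0 : 0 < γ) (hγ1 : γ ≤ 1) {p : ℕ → ℝ}
    (hp : ∀ i, 1 ≤ i → i ≤ t →
      p i ≤ (1 + δ) / δ * log (4 * t ^ 3 / γ) * w i / ((W t : ℝ) - W (i - 1))) :
    ∑ i ∈ range t, p (i + 1) ≤ 2 / δ * log (4 * n ^ 3 / γ) * log (exp 1 * ρ) := by
  have ht : (1 : ℝ) ≤ t := by exact_mod_cast ht1
  have hlogt : 0 ≤ log (4 * t ^ 3 / γ) :=
    log_nonneg ((one_le_div hγ0).2 (by nlinarith [one_le_pow₀ (n := 3) ht]))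
  have hWt : (1 : ℝ) ≤ W t := by exact_mod_cast hwt.trans_le (le_of_eq_sum_Icc hW ht1)
  have hlogn : log (4 * t ^ 3 / γ) ≤ log (4 * n ^ 3 / γ) := by gcongr
  have hc : (1 + δ) / δ * log (4 * t ^ 3 / γ) ≤ 2 / δ * log (4 * n ^ 3 / γ) := by
    gcongr; linarith
  calc ∑ i ∈ range t, p (i + 1)
      ≤ ∑ i ∈ range t,
          (1 + δ) / δ * log (4 * t ^ 3 / γ) * ((w (i + 1) : ℝ) / (W t - W i)) :=
        sum_le_sum fun i hi => by
          rw [← mul_div_assoc]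
          simpa using hp (i + 1) (by omega) (by simpa using hi)
    _ ≤ (1 + δ) / δ * log (4 * t ^ 3 / γ) * log (exp 1 * W t) := by
        rw [← mul_sum]
        gcongr
        exact sum_div_sub_le_log_exp_mul hW ht1 hwt
    _ ≤ 2 / δ * log (4 * n ^ 3 / γ) * log (exp 1 * ρ) :=
        mul_le_mul hc (log_le_log (by positivity) (by gcongr))
          (zero_le_one.trans (one_le_log_exp_mul hWt))
          (mul_nonneg (by positivity) (hlogt.trans hlogn))

end PartialSums

lemma log_two_mul_div_le_two_div_mul_log_mul_log {n δ γ ρ : ℝ} (hn : 1 ≤ n) (hδ0 : 0 < δ)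
    (hδ2 : δ ≤ 2) (hγ0 : 0 < γ) (hγ1 : γ ≤ 1) (hρ : 1 ≤ ρ) :
    log (2 * n / γ) ≤ 2 / δ * log (4 * n ^ 3 / γ) * log (exp 1 * ρ) := by
  have hδ : 1 ≤ 2 / δ := by rwa [le_div_iff₀ hδ0, one_mul]
  have hlog : log (2 * n / γ) ≤ log (4 * n ^ 3 / γ) := by
    gcongr
    · norm_num
    · exact le_self_pow₀ hn (by norm_num)
  have hL : 0 ≤ log (4 * n ^ 3 / γ) :=
    (log_nonneg ((one_le_div hγ0).2 (by linarith))).trans hlog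
  calc log (2 * n / γ) ≤ 1 * log (4 * n ^ 3 / γ) * 1 := by rwa [mul_one, one_mul]
    _ ≤ 2 / δ * log (4 * n ^ 3 / γ) * log (exp 1 * ρ) :=
        mul_le_mul (mul_le_mul_of_nonneg_right hδ hL) (one_le_log_exp_mul hρ) zero_le_one
          (mul_nonneg (by positivity) hL)

lemma exp_mul_of_eq_zero_or_eq_one {x : ℝ} (hx : x = 0 ∨ x = 1) (s : ℝ) :
    exp (s * x) = 1 + (exp s - 1) * x := by
  rcases hx with rfl | rfl <;> simp

lemma eq_indicator_of_eq_zero_or_eq_one {Ω : Type*} {X : Ω → ℝ}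
    (hX : ∀ ω, X ω = 0 ∨ X ω = 1) : X = {ω | X ω = 1}.indicator 1 := by
  ext ω
  rcases hX ω with h | h <;> simp [h]

section ZeroOne

variable {Ω : Type*} [MeasurableSpace Ω] {μ : Measure Ω} {X : Ω → ℝ}

lemma integrable_of_eq_zero_or_eq_one [IsFiniteMeasure μ] (hXm : Measurable X)
    (hX : ∀ ω, X ω = 0 ∨ X ω = 1) : Integrable X μ := by
  rw [eq_indicator_of_eq_zero_or_eq_one hX]
  exact (integrable_const 1).indicator (hXm (measurableSet_singleton 1))

lemma integral_of_eq_zero_or_eq_one (hXm : Measurable X) (hX : ∀ ω, X ω = 0 ∨ X ω = 1) :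
    ∫ ω, X ω ∂μ = μ.real {ω | X ω = 1} := by
  conv_lhs => rw [eq_indicator_of_eq_zero_or_eq_one hX]
  exact integral_indicator_one (hXm (measurableSet_singleton 1))

lemma integrable_exp_mul_of_eq_zero_or_eq_one [IsFiniteMeasure μ] (hXm : Measurable X)
    (hX : ∀ ω, X ω = 0 ∨ X ω = 1) (s : ℝ) : Integrable (fun ω => exp (s * X ω)) μ := by
  simp only [exp_mul_of_eq_zero_or_eq_one (hX _)]
  exact (integrable_const 1).add ((integrable_of_eq_zero_or_eq_one hXm hX).const_mul _)

lemma mgf_of_eq_zero_or_eq_one [IsProbabilityMeasure μ] (hXm : Measurable X)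
    (hX : ∀ ω, X ω = 0 ∨ X ω = 1) (s : ℝ) :
    mgf X μ s = 1 + (exp s - 1) * μ.real {ω | X ω = 1} := by
  simp only [mgf, exp_mul_of_eq_zero_or_eq_one (hX _)]
  rw [integral_add (integrable_const 1) ((integrable_of_eq_zero_or_eq_one hXm hX).const_mul _),
    integral_const, integral_const_mul, integral_of_eq_zero_or_eq_one hXm hX]
  simp

theorem measure_sum_ge_le_of_eq_zero_or_eq_one {ι : Type*} [Fintype ι] {Z : ι → Ω → ℝ}
    (hmeas : ∀ i, Measurable (Z i)) (h01 : ∀ i ω, Z i ω = 0 ∨ Z i ω = 1)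
    (hindep : iIndepFun Z μ) {m s : ℝ} (hs : 0 ≤ s)
    (hm : ∑ i, μ.real {ω | Z i ω = 1} ≤ m) (a : ℝ) :
    μ.real {ω | a ≤ ∑ i, Z i ω} ≤ exp ((exp s - 1) * m - s * a) := by
  have := hindep.isProbabilityMeasure
  have hes : 0 ≤ exp s - 1 := by linarith [one_le_exp hs]
  have hmgf : mgf (∑ i, Z i) μ s ≤ exp ((exp s - 1) * m) := by
    rw [hindep.mgf_sum hmeas]
    calc ∏ i, mgf (Z i) μ s ≤ ∏ i, exp ((exp s - 1) * μ.real {ω | Z i ω = 1}) := by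
          refine prod_le_prod (fun i _ => mgf_nonneg) fun i _ => ?_
          rw [mgf_of_eq_zero_or_eq_one (hmeas i) (h01 i)]
          exact (add_comm _ _).trans_le (add_one_le_exp _)
      _ = exp ((exp s - 1) * ∑ i, μ.real {ω | Z i ω = 1}) := by rw [← exp_sum, mul_sum]
      _ ≤ exp ((exp s - 1) * m) := exp_le_exp.2 (mul_le_mul_of_nonneg_left hm hes)
  have hint := hindep.integrable_exp_mul_sum hmeas (s := univ)
    fun i _ => integrable_exp_mul_of_eq_zero_or_eq_one (hmeas i) (h01 i) s
  calc μ.real {ω | a ≤ ∑ i, Z i ω} ≤ exp (-s * a) * mgf (∑ i, Z i) μ s := by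
        simpa only [Finset.sum_apply] using measure_ge_le_exp_mul_mgf a hs hint
    _ ≤ exp (-s * a) * exp ((exp s - 1) * m) := by gcongr
    _ = exp ((exp s - 1) * m - s * a) := by rw [← exp_add]; ring_nf

end ZeroOne

theorem remembered_set_space_bound_general (n t : ℕ) (ht1 : 1 ≤ t) (htn : t ≤ n)
    (δ γ : ℝ) (hδ0 : 0 < δ) (hδ1 : δ ≤ 1) (hγ0 : 0 < γ) (hγ1 : γ ≤ 1)
    (w : ℕ → ℕ) (hw : ∀ i, 1 ≤ i → i ≤ n → 0 < w i)
    (W : ℕ → ℕ) (hW : ∀ k, W k = ∑ j ∈ Finset.Icc 1 k, w j)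
    (ρ : ℕ) (hρ : ρ = ∑ i ∈ Finset.Icc 1 n, w i)
    (q : ℕ → ℕ → ℝ)
    (hq : ∀ i, 1 ≤ i → i ≤ t → q i t = min 1 (((1 + δ) / δ) * Real.log (4 * t ^ 3 / γ) *
      (w i : ℝ) / ((W t : ℝ) - (W (i - 1) : ℝ))))
    (M : ℝ) (hM : M = (2 / δ) * Real.log (4 * n ^ 3 / γ) * Real.log (Real.exp 1 * ρ))
    {Ω : Type*} [MeasureSpace Ω]
    (Z : Fin t → Ω → ℝ) (hmeas : ∀ i, Measurable (Z i))
    (h01 : ∀ i ω, Z i ω = 0 ∨ Z i ω = 1)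
    (hZq : ∀ i : Fin t, (ℙ {ω | Z i ω = 1}).toReal = q (i.1 + 1) t)
    (hindep : iIndepFun Z ℙ) :
    (ℙ {ω | Real.exp 1 ^ 2 * M ≤ ∑ i, Z i ω}).toReal ≤ γ / (2 * n) := by
  have hn : (1 : ℝ) ≤ n := by exact_mod_cast ht1.trans htn
  have hwt := hw t ht1 htn
  have hWρ : W t ≤ ρ := hρ.trans (hW n).symm ▸ monotone_of_eq_sum_Icc hW htn
  have hρ1 : (1 : ℝ) ≤ ρ := by
    exact_mod_cast hwt.trans_le ((le_of_eq_sum_Icc hW ht1).trans hWρ)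
  have hmean : ∑ i, (ℙ {ω | Z i ω = 1}).toReal ≤ M := by
    simp only [hM, hZq]
    rw [Fin.sum_univ_eq_sum_range (fun i => q (i + 1) t)]
    exact sum_le_two_div_mul_log_mul_log hW ht1 htn hwt hWρ hδ0 hδ1 hγ0 hγ1
      fun i h1 h2 => (hq i h1 h2).trans_le (min_le_right _ _)
  have hlogM : log (2 * n / γ) ≤ M :=
    hM ▸ log_two_mul_div_le_two_div_mul_log_mul_log hn hδ0 (by linarith) hγ0 hγ1 hρ1
  have hM0 : 0 ≤ M := (log_nonneg ((one_le_div hγ0).2 (by linarith))).trans hlogM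
  calc (ℙ {ω | exp 1 ^ 2 * M ≤ ∑ i, Z i ω}).toReal
      ≤ exp ((exp 1 - 1) * M - 1 * (exp 1 ^ 2 * M)) :=
        measure_sum_ge_le_of_eq_zero_or_eq_one hmeas h01 hindep zero_le_one hmean _
    _ ≤ exp (-log (2 * n / γ)) := exp_le_exp.2 (by
          nlinarith [mul_nonneg (exp_pos 1).le
            (mul_nonneg (sub_nonneg.2 (one_le_exp zero_le_one)) hM0)])
    _ = γ / (2 * n) := by rw [exp_neg, exp_log (by positivity), inv_div]

/-- With positive integer weights `w`, partial sums `W`, `ρ = Σ w(i)`,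
`q(i,t) = min{1, ((1+δ)/δ)·ln(4t³/γ)·w(i)/(W(t) − W(i−1))}` and
`M = (2/δ)·ln(4n³/γ)·ln(e·ρ)`: if `Z_1, …, Z_t` are independent random variables with
`Z_i = 1` with probability `q(i,t)` and `0` otherwise, then
`Prob[Σ Z_i ≥ e²·M] ≤ γ/(2n)`. -/
theorem remembered_set_space_bound (n t : ℕ) (hn : 1 ≤ n) (ht1 : 1 ≤ t) (htn : t ≤ n)
    (δ γ : ℝ) (hδ0 : 0 < δ) (hδ1 : δ ≤ 1) (hγ0 : 0 < γ) (hγ1 : γ ≤ 1)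
    (w : ℕ → ℕ) (hw : ∀ i, 1 ≤ i → i ≤ n → 0 < w i)
    (W : ℕ → ℕ) (hW : ∀ k, W k = ∑ j ∈ Finset.Icc 1 k, w j)
    (ρ : ℕ) (hρ : ρ = ∑ i ∈ Finset.Icc 1 n, w i)
    (q : ℕ → ℕ → ℝ)
    (hq : ∀ i, 1 ≤ i → i ≤ t → q i t = min 1 (((1 + δ) / δ) * Real.log (4 * t ^ 3 / γ) *
      (w i : ℝ) / ((W t : ℝ) - (W (i - 1) : ℝ))))
    (M : ℝ) (hM : M = (2 / δ) * Real.log (4 * n ^ 3 / γ) * Real.log (Real.exp 1 * ρ))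
    {Ω : Type*} [MeasureSpace Ω] [IsProbabilityMeasure (ℙ : Measure Ω)]
    (Z : Fin t → Ω → ℝ) (hmeas : ∀ i, Measurable (Z i))
    (h01 : ∀ i ω, Z i ω = 0 ∨ Z i ω = 1)
    (hZq : ∀ i : Fin t, (ℙ {ω | Z i ω = 1}).toReal = q (i.1 + 1) t)
    (hindep : iIndepFun Z ℙ) :
    (ℙ {ω | Real.exp 1 ^ 2 * M ≤ ∑ i, Z i ω}).toReal ≤ γ / (2 * n) :=
  remembered_set_space_bound_general n t ht1 htn δ γ hδ0 hδ1 hγ0 hγ1 w hw W hW ρ hρ q hq M hM Z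
    hmeas h01 hZq hindep
end

section
/- Let n and k be positive integers, δ > 0 a real, and let ℓ, m, d, p, est be nonnegative reals satisfying ℓ + m = p, ℓ + d = n, p ≤ n·k, and m ≤ est ≤ (1 + δ/k)·m. Then the estimate est_d = est + n − p satisfies d ≤ est_d ≤ d + δ·n. -/
/-- (Accuracy of the LCS-to-AMDP reduction.) If `ℓ + m = p`,
`ℓ + d = n`, `p ≤ n·k`, and `m ≤ est ≤ (1 + δ/k)·m`, then the estimate
`est_d = est + n − p` satisfies `d ≤ est_d ≤ d + δ·n`. -/
theorem edit_distance_estimate_accuracy (n k : ℕ) (hn : 0 < n) (hk : 0 < k)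
    (δ : ℝ) (hδ : 0 < δ)
    (ℓ m d p est : ℝ) (hℓ : 0 ≤ ℓ) (hm : 0 ≤ m) (hd : 0 ≤ d) (hp : 0 ≤ p)
    (hest0 : 0 ≤ est)
    (h1 : ℓ + m = p) (h2 : ℓ + d = n) (h3 : p ≤ n * k)
    (h4 : m ≤ est) (h5 : est ≤ (1 + δ / k) * m) :
    d ≤ est + n - p ∧ est + n - p ≤ d + δ * n := by
  have hk' : (0:ℝ) < k := by exact_mod_cast hk
  constructor
  · linarith
  · have hmp : m ≤ p := by linarith
    have : δ / k * m ≤ δ / k * (n * k) := by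
      apply mul_le_mul_of_nonneg_left (by linarith) (by positivity)
    have h6 : δ / k * (n * k) = δ * n := by field_simp
    nlinarith
end

section
/- Suppose x(i_1), x(i_2), …, x(i_r) and y(j_1), y(j_2), …, y(j_r) form a common subsequence of x and y (so i_1 < ⋯ < i_r, j_1 < ⋯ < j_r, and x(i_k) = y(j_k) for all k). Let i ∈ {1,…,n} be arbitrary with i ≤ i_r, and let a be the smallest index with i_a ≥ i. Then the defect satisfies n − r ≥ |j_a − i|. -/
lemma sm_gap {r : ℕ} (f : Fin r → ℕ) (hm : StrictMono f) :
    ∀ d m (h : m + d < r), f ⟨m, by omega⟩ + d ≤ f ⟨m + d, h⟩ := by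
  intro d
  induction d with
  | zero => intro m h; simp
  | succ d ih =>
    intro m h
    have h1 : m + d < r := by omega
    have h2 := ih m h1
    have h3 : f ⟨m + d, h1⟩ < f ⟨m + d + 1, by omega⟩ := by
      apply hm; simp [Fin.lt_def]
    have h4 : (⟨m + (d+1), h⟩ : Fin r) = ⟨m + d + 1, by omega⟩ := by
      congr 1
    rw [h4]; omega

lemma sm_lower {r : ℕ} (f : Fin r → ℕ) (hm : StrictMono f)
    (h1 : ∀ k, 1 ≤ f k) (k : Fin r) : (k : ℕ) + 1 ≤ f k := by
  have h2 := sm_gap f hm k 0 (by omega)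
  have h3 := h1 (⟨0, by omega⟩ : Fin r)
  have hk : f k = f ⟨0 + (k:ℕ), by omega⟩ := by congr 1; ext; simp
  rw [hk]
  omega

lemma sm_upper {r n : ℕ} (f : Fin r → ℕ) (hm : StrictMono f)
    (hn : ∀ k, f k ≤ n) (k : Fin r) : f k + (r - 1 - k) ≤ n := by
  have hr : 0 < r := k.pos
  have h2 := sm_gap f hm (r - 1 - k) k (by omega)
  have h3 := hn (⟨(k:ℕ) + (r - 1 - k), by omega⟩ : Fin r)
  have hk : f k = f ⟨(k:ℕ), by omega⟩ := by congr 1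
  rw [hk]
  omega

/-- If `x(i_1), …, x(i_r)` and `y(j_1), …, y(j_r)` form a common
subsequence of the length-`n` strings `x` and `y`, `i ∈ {1,…,n}` is arbitrary with
`i ≤ i_r`, and `a` is the smallest index with `i_a ≥ i`, then the defect satisfies
`n − r ≥ |j_a − i|`. -/
theorem defect_ge_gap_at_first_index {α : Type*} (n r : ℕ) (x y : ℕ → α)
    (idx jdx : Fin r → ℕ)
    (hi : ∀ k, 1 ≤ idx k ∧ idx k ≤ n) (hj : ∀ k, 1 ≤ jdx k ∧ jdx k ≤ n)
    (hmi : StrictMono idx) (hmj : StrictMono jdx)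
    (hmatch : ∀ k, x (idx k) = y (jdx k))
    (i : ℕ) (hi1 : 1 ≤ i) (hin : i ≤ n)
    (a : Fin r) (ha : i ≤ idx a) (hamin : ∀ b, i ≤ idx b → a ≤ b) :
    |(jdx a : ℤ) - (i : ℤ)| ≤ (n : ℤ) - r := by
  have hjlo := sm_lower jdx hmj (fun k => (hj k).1) a
  have hjhi := sm_upper jdx hmj (fun k => (hj k).2) a
  have hihi := sm_upper idx hmi (fun k => (hi k).2) a
  have hia : (a : ℕ) + 1 ≤ i := by
    rcases Nat.eq_zero_or_pos (a : ℕ) with h0 | h0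
    · omega
    · have hb : (a : ℕ) - 1 < r := by omega
      set b : Fin r := ⟨(a : ℕ) - 1, hb⟩ with hbdef
      have hblo := sm_lower idx hmi (fun k => (hi k).1) b
      have hbv : (b : ℕ) = (a : ℕ) - 1 := rfl
      have hnot : ¬ i ≤ idx b := fun h => by
        have := hamin b h
        rw [Fin.le_def, hbv] at this
        omega
      omega
  have hr : 0 < r := a.pos
  rw [abs_le]
  constructor <;> push_cast <;> omega
end
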